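/- For all a, b > 0, the variance of log Y under the Beta(a,b) distribution equals ψ₁(a) − ψ₁(a+b): ∫₀¹ (log y − (ψ(a) − ψ(a+b)))² · f_{a,b}(y) dy = ψ₁(a) − ψ₁(a+b). -/

import Mathlib

/-!
Write `M_k(x) = ∫₀¹ (log y)^k y^(x-1) (1-y)^(b-1) dy`. Differentiating under the integral sign
gives `M_k' = M_(k+1)`, while `M_0 = B(·, b) = Γ(·)Γ(b)/Γ(· + b)` has logarithmic derivative
`h = ψ(·) - ψ(· + b)`. Hence `M_1 = M_0 h` and `M_2 = (M_0 h)' = M_0 (h² + h')`, so the variance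
`M_2/M_0 - h²` of `log Y` is `h'(a) = ψ₁(a) - ψ₁(a + b)`.
-/

open MeasureTheory Real Set

/-- The digamma function ψ(x) = Γ'(x)/Γ(x). -/
noncomputable def digamma (x : ℝ) : ℝ := deriv Real.Gamma x / Real.Gamma x

/-- The trigamma function ψ₁ = ψ'. -/
noncomputable def trigamma (x : ℝ) : ℝ := deriv digamma x

/-- The Beta(a,b) density f_{a,b}(y) = y^{a−1}(1−y)^{b−1}/B(a,b),
with B(a,b) = Γ(a)Γ(b)/Γ(a+b). -/
noncomputable def betaDensity (a b y : ℝ) : ℝ :=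
  y ^ (a - 1) * (1 - y) ^ (b - 1) / (Real.Gamma a * Real.Gamma b / Real.Gamma (a + b))

open ProbabilityTheory

theorem Real.analyticAt_Gamma {s : ℝ} (hs : ∀ m : ℕ, s ≠ -m) : AnalyticAt ℝ Gamma s := by
  have hs' : ∀ m : ℕ, (s : ℂ) ≠ -m := by exact_mod_cast hs
  have hC : AnalyticAt ℂ (fun z => ((Complex.Gamma z)⁻¹)⁻¹) s :=
    (Complex.differentiable_one_div_Gamma.analyticAt (s : ℂ)).inv
      (inv_ne_zero (Complex.Gamma_ne_zero hs'))
  simpa only [inv_inv, Complex.Gamma_ofReal, Complex.ofReal_re] using hC.re_ofReal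

theorem hasDerivAt_Gamma_mul_digamma {x : ℝ} (hx : ∀ m : ℕ, x ≠ -m) :
    HasDerivAt Gamma (Gamma x * digamma x) x := by
  rw [digamma, mul_div_cancel₀ _ (Gamma_ne_zero hx)]
  exact (differentiableAt_Gamma hx).hasDerivAt

theorem hasDerivAt_digamma {x : ℝ} (hx : ∀ m : ℕ, x ≠ -m) :
    HasDerivAt digamma (trigamma x) x :=
  ((Real.analyticAt_Gamma hx).deriv.div (Real.analyticAt_Gamma hx)
    (Gamma_ne_zero hx)).differentiableAt.hasDerivAt

theorem ne_neg_natCast_of_pos {s : ℝ} (hs : 0 < s) (m : ℕ) : s ≠ -m := by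
  have : (0 : ℝ) ≤ m := m.cast_nonneg
  linarith

theorem hasDerivAt_beta_left {a b : ℝ} (ha : 0 < a) (hb : 0 < b) :
    HasDerivAt (fun x => beta x b) (beta a b * (digamma a - digamma (a + b))) a := by
  have hΓab : HasDerivAt (fun x => Gamma (x + b)) (Gamma (a + b) * digamma (a + b)) a :=
    (hasDerivAt_Gamma_mul_digamma (ne_neg_natCast_of_pos (add_pos ha hb))).comp_add_const a b
  have hne := (Gamma_pos_of_pos (add_pos ha hb)).ne'
  refine (((hasDerivAt_Gamma_mul_digamma (ne_neg_natCast_of_pos ha)).mul_const (Gamma b)).div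
    hΓab hne).congr_deriv ?_
  unfold ProbabilityTheory.beta
  field_simp

theorem ofReal_rpow_mul_one_sub_rpow {y : ℝ} (hy : y ∈ Icc (0 : ℝ) 1) (a b : ℝ) :
    ((y ^ (a - 1) * (1 - y) ^ (b - 1) : ℝ) : ℂ)
      = (y : ℂ) ^ ((a : ℂ) - 1) * (1 - (y : ℂ)) ^ ((b : ℂ) - 1) := by
  push_cast [Complex.ofReal_cpow hy.1, Complex.ofReal_cpow (sub_nonneg.2 hy.2)]
  rfl

theorem integrableOn_rpow_mul_one_sub_rpow {a b : ℝ} (ha : 0 < a) (hb : 0 < b) :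
    IntegrableOn (fun y => y ^ (a - 1) * (1 - y) ^ (b - 1)) (Ioo (0 : ℝ) 1) := by
  have h := (Complex.betaIntegral_convergent (u := a) (v := b) (by simpa) (by simpa)).1
  have h' := (h.congr_fun (fun y hy =>
    (ofReal_rpow_mul_one_sub_rpow (Ioc_subset_Icc_self hy) a b).symm) measurableSet_Ioc).re
  simp only [RCLike.re_to_complex, Complex.ofReal_re] at h'
  exact IntegrableOn.mono_set h' Ioo_subset_Ioc_self

theorem integral_rpow_mul_one_sub_rpow {a b : ℝ} (ha : 0 < a) (hb : 0 < b) :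
    ∫ y in Ioo (0 : ℝ) 1, y ^ (a - 1) * (1 - y) ^ (b - 1) = beta a b := by
  have h : Complex.betaIntegral a b
      = ((∫ y in (0 : ℝ)..1, y ^ (a - 1) * (1 - y) ^ (b - 1) : ℝ) : ℂ) := by
    rw [Complex.betaIntegral, ← intervalIntegral.integral_ofReal]
    refine intervalIntegral.integral_congr fun y hy => ?_
    rw [uIcc_of_le zero_le_one] at hy
    exact (ofReal_rpow_mul_one_sub_rpow hy a b).symm
  rw [beta_eq_betaIntegralReal a b ha hb, h, Complex.ofReal_re,
    intervalIntegral.integral_of_le zero_le_one, integral_Ioc_eq_integral_Ioo]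

theorem abs_log_pow_mul_rpow_le {y t : ℝ} (k : ℕ) (hy0 : 0 < y) (hy1 : y ≤ 1) (ht : 0 < t) :
    |log y| ^ k * y ^ (t * k) ≤ (1 / t) ^ k := by
  rw [rpow_mul_natCast hy0.le, ← mul_pow, ← abs_of_pos (rpow_pos_of_pos hy0 t), ← abs_mul]
  exact pow_le_pow_left₀ (abs_nonneg _) (abs_log_mul_self_rpow_lt y t hy0 hy1 ht).le k

theorem integrableOn_log_pow_mul_rpow_mul_one_sub_rpow (k : ℕ) {a b : ℝ} (ha : 0 < a)
    (hb : 0 < b) :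
    IntegrableOn (fun y => log y ^ k * (y ^ (a - 1) * (1 - y) ^ (b - 1))) (Ioo (0 : ℝ) 1) := by
  -- `y ^ (t * k)` absorbs `|log y| ^ k` and leaves the kernel with first parameter `t`
  set t := a / (k + 1) with ht_def
  have ht : 0 < t := by positivity
  have ha_eq : a - 1 = t * k + (t - 1) := by
    rw [ht_def]; field_simp; ring
  refine ((integrableOn_rpow_mul_one_sub_rpow ht hb).const_mul ((1 / t) ^ k)).mono'
    (by fun_prop : Measurable _).aestronglyMeasurable ?_
  refine (ae_restrict_iff' measurableSet_Ioo).2 (Filter.Eventually.of_forall ?_)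
  rintro y ⟨hy0, hy1⟩
  have h1y : 0 < 1 - y := sub_pos.2 hy1
  calc ‖log y ^ k * (y ^ (a - 1) * (1 - y) ^ (b - 1))‖
      = (|log y| ^ k * y ^ (t * k)) * (y ^ (t - 1) * (1 - y) ^ (b - 1)) := by
        rw [norm_mul, norm_pow, norm_eq_abs, norm_of_nonneg (by positivity), ha_eq,
          rpow_add hy0]
        ring
    _ ≤ (1 / t) ^ k * (y ^ (t - 1) * (1 - y) ^ (b - 1)) := by
        gcongr
        exact abs_log_pow_mul_rpow_le k hy0 hy1.le ht

noncomputable def logBetaMoment (k : ℕ) (a b : ℝ) : ℝ :=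
  ∫ y in Ioo (0 : ℝ) 1, log y ^ k * (y ^ (a - 1) * (1 - y) ^ (b - 1))

theorem hasDerivAt_logBetaMoment (k : ℕ) {a b : ℝ} (ha : 0 < a) (hb : 0 < b) :
    HasDerivAt (fun x => logBetaMoment k x b) (logBetaMoment (k + 1) a b) a := by
  have hdom := (integrableOn_log_pow_mul_rpow_mul_one_sub_rpow (k + 1) (half_pos ha) hb).norm
  refine (hasDerivAt_integral_of_dominated_loc_of_deriv_le (μ := volume.restrict (Ioo 0 1))
    (F := fun x y => log y ^ k * (y ^ (x - 1) * (1 - y) ^ (b - 1)))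
    (F' := fun x y => log y ^ (k + 1) * (y ^ (x - 1) * (1 - y) ^ (b - 1)))
    (Metric.ball_mem_nhds a (half_pos ha))
    (Filter.Eventually.of_forall fun x => (by fun_prop : Measurable _).aestronglyMeasurable)
    (integrableOn_log_pow_mul_rpow_mul_one_sub_rpow k ha hb)
    (by fun_prop : Measurable _).aestronglyMeasurable ?_ hdom ?_).2
  all_goals refine (ae_restrict_iff' measurableSet_Ioo).2 (Filter.Eventually.of_forall ?_)
  · rintro y ⟨hy0, hy1⟩ x hx
    have h1y : 0 < 1 - y := sub_pos.2 hy1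
    rw [Metric.mem_ball, Real.dist_eq, abs_lt] at hx
    simp only [norm_mul, norm_pow, norm_eq_abs, abs_of_pos (rpow_pos_of_pos hy0 _),
      abs_of_pos (rpow_pos_of_pos h1y _)]
    gcongr _ * (?_ * _)
    exact rpow_le_rpow_of_exponent_ge hy0 hy1.le (by linarith)
  · rintro y ⟨hy0, -⟩ x -
    have hpow : HasDerivAt (fun x => y ^ (x - 1)) (y ^ (x - 1) * log y) x := by
      simpa using ((hasStrictDerivAt_const_rpow hy0 (x - 1)).hasDerivAt).comp_sub_const x 1
    refine ((hpow.mul_const ((1 - y) ^ (b - 1))).const_mul (log y ^ k)).congr_deriv ?_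
    ring

theorem logBetaMoment_zero {a b : ℝ} (ha : 0 < a) (hb : 0 < b) :
    logBetaMoment 0 a b = beta a b := by
  simpa only [logBetaMoment, pow_zero, one_mul] using integral_rpow_mul_one_sub_rpow ha hb

theorem logBetaMoment_one {a b : ℝ} (ha : 0 < a) (hb : 0 < b) :
    logBetaMoment 1 a b = beta a b * (digamma a - digamma (a + b)) := by
  refine (hasDerivAt_logBetaMoment 0 ha hb).unique
    ((hasDerivAt_beta_left ha hb).congr_of_eventuallyEq ?_)
  filter_upwards [Ioi_mem_nhds ha] with x hx using logBetaMoment_zero hx hb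

theorem logBetaMoment_two {a b : ℝ} (ha : 0 < a) (hb : 0 < b) :
    logBetaMoment 2 a b = beta a b *
      ((digamma a - digamma (a + b)) ^ 2 + (trigamma a - trigamma (a + b))) := by
  have hψ : HasDerivAt (fun x => digamma x - digamma (x + b)) (trigamma a - trigamma (a + b)) a :=
    (hasDerivAt_digamma (ne_neg_natCast_of_pos ha)).sub
      ((hasDerivAt_digamma (ne_neg_natCast_of_pos (add_pos ha hb))).comp_add_const a b)
  refine (hasDerivAt_logBetaMoment 1 ha hb).unique
    ((((hasDerivAt_beta_left ha hb).mul hψ).congr_of_eventuallyEq ?_).congr_deriv ?_)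
  · filter_upwards [Ioi_mem_nhds ha] with x hx using logBetaMoment_one hx hb
  · ring

theorem integral_sub_sq_mul {α : Type*} [MeasurableSpace α] {μ : Measure α} {f w : α → ℝ}
    (c : ℝ) (hw : Integrable w μ) (hfw : Integrable (fun x => f x * w x) μ)
    (hf2w : Integrable (fun x => f x ^ 2 * w x) μ) :
    ∫ x, (f x - c) ^ 2 * w x ∂μ
      = ∫ x, f x ^ 2 * w x ∂μ - 2 * c * ∫ x, f x * w x ∂μ + c ^ 2 * ∫ x, w x ∂μ := by
  have hexp : (fun x => (f x - c) ^ 2 * w x)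
      = fun x => f x ^ 2 * w x - 2 * c * (f x * w x) + c ^ 2 * w x := by
    ext x; ring
  have hsub : Integrable (fun x => f x ^ 2 * w x - 2 * c * (f x * w x)) μ :=
    hf2w.sub (hfw.const_mul _)
  rw [hexp, integral_add hsub (hw.const_mul _),
    integral_sub hf2w (hfw.const_mul _), integral_const_mul, integral_const_mul]

/-- Var[log Y] under Beta(a,b) equals ψ₁(a) − ψ₁(a+b). -/
theorem beta_var_log (a b : ℝ) (ha : 0 < a) (hb : 0 < b) :
    ∫ y in Set.Ioo (0:ℝ) 1,
      (Real.log y - (digamma a - digamma (a + b))) ^ 2 * betaDensity a b y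
      = trigamma a - trigamma (a + b) := by
  have h0 := integrableOn_rpow_mul_one_sub_rpow ha hb
  have h1 := integrableOn_log_pow_mul_rpow_mul_one_sub_rpow 1 ha hb
  have h2 := integrableOn_log_pow_mul_rpow_mul_one_sub_rpow 2 ha hb
  simp only [pow_one] at h1
  have hB := (beta_pos ha hb).ne'
  calc _ = (∫ y in Ioo (0 : ℝ) 1, (log y - (digamma a - digamma (a + b))) ^ 2
            * (y ^ (a - 1) * (1 - y) ^ (b - 1))) / beta a b := by
        simp only [betaDensity, mul_div_assoc']
        exact integral_div _ _
    _ = (logBetaMoment 2 a b - 2 * (digamma a - digamma (a + b)) * logBetaMoment 1 a b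
          + (digamma a - digamma (a + b)) ^ 2 * logBetaMoment 0 a b) / beta a b := by
        rw [integral_sub_sq_mul _ h0 h1 h2]
        simp only [logBetaMoment, pow_zero, one_mul, pow_one]
    _ = trigamma a - trigamma (a + b) := by
        rw [logBetaMoment_two ha hb, logBetaMoment_one ha hb, logBetaMoment_zero ha hb]
        field_simp
        ring
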